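/- Let ω ≥ 1 and let (a_k) be a real sequence with a_k ≠ 0 for k ≥ k₀, such that for all k ≥ k₀ the signs alternate with period ω: sign(a_{k+ω}) = −sign(a_k); and suppose (|a_k|) is Z(ω)-monotonously decreasing for k ≥ k₀ (|a_{k+ω}| ≤ |a_k|) with |a_k| → 0. Then the series ∑_{k=k₀}^∞ a_k converges. -/

import Mathlib

/-!
Split the series into the `ω` residue classes modulo `ω`. Along each class the signs alternate
and the absolute values decrease to `0`, so each subseries converges by the alternating series
test. The partial sums up to a multiple of `ω` therefore converge to the sum of the `ω` limits,
and any other partial sum differs from one of these by fewer than `ω` terms, each tending to `0`.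
-/

open Filter Finset Topology

theorem Real.sign_mul_abs (x : ℝ) : Real.sign x * |x| = x := by
  rcases lt_trichotomy x 0 with hx | rfl | hx
  · rw [Real.sign_of_neg hx, abs_of_neg hx]; ring
  · simp
  · rw [Real.sign_of_pos hx, abs_of_pos hx]; ring

theorem Filter.Tendsto.of_comp_mul_add {α : Type*} {l : Filter α} {u : ℕ → α} {ω : ℕ}
    (hω : 0 < ω) (h : ∀ r < ω, Tendsto (fun n => u (n * ω + r)) atTop l) :
    Tendsto u atTop l := by
  rw [tendsto_def]
  intro s hs
  obtain ⟨N, hN⟩ := eventually_atTop.1 <|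
    (range ω).eventually_all.2 fun r hr => h r (mem_range.1 hr) hs
  filter_upwards [eventually_ge_atTop (N * ω)] with k hk
  rw [← Nat.div_add_mod' k ω]
  exact hN (k / ω) ((Nat.le_div_iff_mul_le hω).2 hk) (k % ω) (mem_range.2 (Nat.mod_lt k hω))

theorem Nat.tendsto_mul_add_atTop {ω : ℕ} (hω : 0 < ω) (i : ℕ) :
    Tendsto (fun j => j * ω + i) atTop atTop :=
  StrictMono.tendsto_atTop fun _ _ h => by gcongr

theorem Finset.sum_range_mul_eq_sum_sum {M : Type*} [AddCommMonoid M] (b : ℕ → M) (n ω : ℕ) :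
    ∑ k ∈ range (n * ω), b k = ∑ i ∈ range ω, ∑ j ∈ range n, b (j * ω + i) := by
  induction n with
  | zero => simp
  | succ n ih => simp only [add_mul, one_mul, sum_range_add, ih, sum_range_succ, sum_add_distrib]

theorem exists_tendsto_sum_range_of_sign_succ_eq_neg {b : ℕ → ℝ}
    (hsign : ∀ j, Real.sign (b (j + 1)) = -Real.sign (b j)) (hanti : Antitone (|b ·|))
    (hlim : Tendsto (|b ·|) atTop (𝓝 0)) :
    ∃ l, Tendsto (fun n => ∑ j ∈ range n, b j) atTop (𝓝 l) := by
  have sign_eq : ∀ j, Real.sign (b j) = Real.sign (b 0) * (-1) ^ j := by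
    intro j
    induction j with
    | zero => simp
    | succ j ih => rw [hsign, ih]; ring
  have hb : ∀ j, b j = Real.sign (b 0) * ((-1) ^ j * |b j|) := fun j => by
    rw [← mul_assoc, ← sign_eq, Real.sign_mul_abs]
  obtain ⟨l, hl⟩ := hanti.tendsto_alternating_series_of_tendsto_zero hlim
  refine ⟨Real.sign (b 0) * l, ?_⟩
  simpa only [mul_sum, ← hb] using hl.const_mul (Real.sign (b 0))

theorem exists_tendsto_sum_range_of_sign_add_eq_neg {b : ℕ → ℝ} {ω : ℕ} (hω : 0 < ω)
    (hsign : ∀ k, Real.sign (b (k + ω)) = -Real.sign (b k)) (hZ : ∀ k, |b (k + ω)| ≤ |b k|)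
    (hlim : Tendsto (|b ·|) atTop (𝓝 0)) :
    ∃ S, Tendsto (fun n => ∑ k ∈ range n, b k) atTop (𝓝 S) := by
  have step : ∀ j i, (j + 1) * ω + i = j * ω + i + ω := fun j i => by ring
  have residue : ∀ i, ∃ L, Tendsto (fun n => ∑ j ∈ range n, b (j * ω + i)) atTop (𝓝 L) :=
    fun i => exists_tendsto_sum_range_of_sign_succ_eq_neg
      (fun j => by rw [step]; exact hsign _)
      (antitone_nat_of_succ_le fun j => by rw [step]; exact hZ _)
      (hlim.comp (Nat.tendsto_mul_add_atTop hω i))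
  choose L hL using residue
  refine ⟨∑ i ∈ range ω, L i, Tendsto.of_comp_mul_add hω fun r _ => ?_⟩
  have blocks : Tendsto (fun n => ∑ k ∈ range (n * ω), b k) atTop (𝓝 (∑ i ∈ range ω, L i)) := by
    simpa only [sum_range_mul_eq_sum_sum] using tendsto_finsetSum _ fun i _ => hL i
  have tail : Tendsto (fun n => ∑ i ∈ range r, b (n * ω + i)) atTop (𝓝 0) := by
    simpa using tendsto_finsetSum (range r) fun i _ =>
      (tendsto_zero_iff_abs_tendsto_zero _).2 (hlim.comp (Nat.tendsto_mul_add_atTop hω i))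
  simpa [sum_range_add] using blocks.add tail

theorem periodical_single_series_converges_general
    (ω k₀ : ℕ) (hω : 1 ≤ ω) (a : ℕ → ℝ)
    (hsign : ∀ k : ℕ, k₀ ≤ k → Real.sign (a (k + ω)) = - Real.sign (a k))
    (hZ : ∀ k : ℕ, k₀ ≤ k → |a (k + ω)| ≤ |a k|)
    (hlim : Tendsto (fun k => |a k|) atTop (nhds 0)) :
    ∃ S : ℝ, Tendsto (fun m => ∑ k ∈ Finset.Icc k₀ m, a k) atTop (nhds S) := by
  obtain ⟨S, hS⟩ := exists_tendsto_sum_range_of_sign_add_eq_neg (b := fun k => a (k₀ + k)) hω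
    (fun k => by simpa only [add_assoc] using hsign (k₀ + k) (Nat.le_add_right k₀ k))
    (fun k => by simpa only [add_assoc] using hZ (k₀ + k) (Nat.le_add_right k₀ k))
    (hlim.comp (by simpa only [add_comm] using tendsto_add_atTop_nat k₀))
  refine ⟨S, (hS.comp ((tendsto_sub_atTop_nat k₀).comp (tendsto_add_atTop_nat 1))).congr fun m => ?_⟩
  rw [← Ico_add_one_right_eq_Icc, sum_Ico_eq_sum_range]
  rfl

/-- An `ω`-periodical-single series: if the signs of `a_k` alternate with period
`ω` and `|a_k|` is `Z(ω)`-monotonously decreasing to `0`, then `∑_{k=k₀}^∞ a_k`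
converges. -/
theorem periodical_single_series_converges
    (ω k₀ : ℕ) (hω : 1 ≤ ω) (a : ℕ → ℝ)
    (hne : ∀ k : ℕ, k₀ ≤ k → a k ≠ 0)
    (hsign : ∀ k : ℕ, k₀ ≤ k → Real.sign (a (k + ω)) = - Real.sign (a k))
    (hZ : ∀ k : ℕ, k₀ ≤ k → |a (k + ω)| ≤ |a k|)
    (hlim : Tendsto (fun k => |a k|) atTop (nhds 0)) :
    ∃ S : ℝ, Tendsto (fun m => ∑ k ∈ Finset.Icc k₀ m, a k) atTop (nhds S) :=
  periodical_single_series_converges_general ω k₀ hω a hsign hZ hlim
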